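/- arXiv:2107.11743 — 3 statements merged into one kernel-verified Lean document; each statement's English description precedes it below -/
import Mathlib

section
/- Let n ≥ 2 be an integer and let γ ∈ (0,1) with γ ≠ 1/2. Then for all natural numbers m and m', (m' + 2γ)(m' + n) − (m − n + 1)(m + 1 − 2γ) ≠ 0 (all quantities regarded as real numbers). -/
/-- Non-resonance condition for homogeneous solvability of the Dirichlet problem for the
degenerate operator `D u = -div(y^(1-2γ) ∇u)` on the upper half-space. -/
theorem nonresonance_dirichlet (n : ℕ) (hn : 2 ≤ n) (γ : ℝ) (hγ : γ ∈ Set.Ioo (0:ℝ) 1)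
    (hγ' : γ ≠ 1/2) (m m' : ℕ) :
    ((m' : ℝ) + 2*γ) * ((m' : ℝ) + n) - ((m : ℝ) - n + 1) * ((m : ℝ) + 1 - 2*γ) ≠ 0 := by
  obtain ⟨h0, h1⟩ := hγ
  have key : ((m' : ℝ) + 2*γ) * ((m' : ℝ) + n) - ((m : ℝ) - n + 1) * ((m : ℝ) + 1 - 2*γ)
      = ((m:ℝ) + m' + 1) * (((m':ℝ) + n - m - 1) + 2*γ) := by ring
  rw [key]
  apply mul_ne_zero
  · positivity
  · intro h
    set z : ℤ := (m' : ℤ) + n - m - 1 with hzdef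
    have hz : (z : ℝ) = -(2*γ) := by
      simp only [hzdef]; push_cast; linarith
    have hlt : (-2 : ℤ) < z := by
      have : (-2 : ℝ) < (z : ℝ) := by rw [hz]; linarith
      exact_mod_cast this
    have hlt' : z < 0 := by
      have : (z : ℝ) < 0 := by rw [hz]; linarith
      exact_mod_cast this
    have hz1 : z = -1 := by omega
    apply hγ'
    rw [hz1] at hz
    push_cast at hz
    linarith
end

section
/- Let γ ∈ (0,1) and ε > 0. Let f₁ : [0,ε] → ℝ be continuously differentiable, f₂ : [0,ε] → ℝ continuous, and let w : (0,ε) → ℝ be twice continuously differentiable and satisfy −(y^{1−2γ} w′(y))′ = (y^{2−2γ} f₁(y))′ + y^{1−2γ} f₂(y) for all y ∈ (0,ε). Then there exist real constants a and b such that for all y ∈ (0,ε): w(y) = a + b·y^{2γ} − ∫₀^y σ f₁(σ) dσ − ∫₀^y σ^{2γ−1} ( ∫₀^σ τ^{1−2γ} f₂(τ) dτ ) dσ. -/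
open Real Set intervalIntegral

/-!
The equation says that `y^(1-2γ) w' + y^(2-2γ) f₁ + ∫₀^y τ^(1-2γ) f₂` has derivative zero on
`(0,ε)`, hence equals a constant `C`. Dividing by `y^(1-2γ)` gives
`w' = C y^(2γ-1) - y f₁ - y^(2γ-1) ∫₀^y τ^(1-2γ) f₂`, and a second integration yields the formula
with `b = C / (2γ)`. Both weights `τ^(1-2γ)` and `σ^(2γ-1)` have exponent `> -1`, so the integrals
from `0` converge although the integrands may blow up there.
-/

lemma exists_eq_add_of_hasDerivAt_Ioo {f g f' : ℝ → ℝ} {a b : ℝ}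
    (hf : ∀ x ∈ Ioo a b, HasDerivAt f (f' x) x) (hg : ∀ x ∈ Ioo a b, HasDerivAt g (f' x) x) :
    ∃ c, ∀ x ∈ Ioo a b, f x = g x + c :=
  isOpen_Ioo.exists_eq_add_of_deriv_eq isPreconnected_Ioo
    (fun x hx => (hf x hx).differentiableAt.differentiableWithinAt)
    (fun x hx => (hg x hx).differentiableAt.differentiableWithinAt)
    (fun x hx => (hf x hx).deriv.trans (hg x hx).deriv.symm)

lemma hasDerivAt_integral_of_continuousOn_Ioo {g : ℝ → ℝ} {a b y : ℝ}
    (hint : IntervalIntegrable g MeasureTheory.volume a y) (hg : ContinuousOn g (Ioo a b))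
    (hy : y ∈ Ioo a b) : HasDerivAt (fun t => ∫ τ in a..t, g τ) (g y) y :=
  integral_hasDerivAt_right hint (hg.stronglyMeasurableAtFilter isOpen_Ioo y hy)
    (hg.continuousAt (isOpen_Ioo.mem_nhds hy))

section WeightedPrimitive

variable {p ε y : ℝ} {g : ℝ → ℝ}

lemma intervalIntegrable_rpow_mul (hp : -1 < p) (hg : ContinuousOn g (Icc 0 ε))
    (hy : y ∈ Icc 0 ε) : IntervalIntegrable (fun τ => τ ^ p * g τ) MeasureTheory.volume 0 y :=
  (intervalIntegrable_rpow' hp).mul_continuousOn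
    (hg.mono (uIcc_subset_Icc (left_mem_Icc.2 (hy.1.trans hy.2)) hy))

lemma continuousOn_integral_rpow_mul (hp : -1 < p) (hε : 0 ≤ ε)
    (hg : ContinuousOn g (Icc 0 ε)) :
    ContinuousOn (fun y => ∫ τ in (0:ℝ)..y, τ ^ p * g τ) (Icc 0 ε) :=
  uIcc_of_le hε ▸ continuousOn_primitive_interval'
    (intervalIntegrable_rpow_mul hp hg (right_mem_Icc.2 hε)) left_mem_uIcc

lemma hasDerivAt_integral_rpow_mul (hp : -1 < p) (hg : ContinuousOn g (Icc 0 ε))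
    (hy : y ∈ Ioo 0 ε) :
    HasDerivAt (fun y => ∫ τ in (0:ℝ)..y, τ ^ p * g τ) (y ^ p * g y) y :=
  hasDerivAt_integral_of_continuousOn_Ioo
    (intervalIntegrable_rpow_mul hp hg (Ioo_subset_Icc_self hy))
    ((continuousOn_id.rpow_const fun _ hx => Or.inl hx.1.ne').mul
      (hg.mono Ioo_subset_Icc_self)) hy

end WeightedPrimitive

section DegenerateODE

variable {γ ε : ℝ} {f₁ f₂ w : ℝ → ℝ}

lemma exists_deriv_eq_of_degenerate_ode (hγ : γ < 1) (hf₁ : ContDiffOn ℝ 1 f₁ (Icc 0 ε))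
    (hf₂ : ContinuousOn f₂ (Icc 0 ε)) (hw : ContDiffOn ℝ 2 w (Ioo 0 ε))
    (heq : ∀ y ∈ Ioo 0 ε,
      -deriv (fun t : ℝ => t ^ (1 - 2*γ) * deriv w t) y
        = deriv (fun t : ℝ => t ^ (2 - 2*γ) * f₁ t) y + y ^ (1 - 2*γ) * f₂ y) :
    ∃ C, ∀ y ∈ Ioo 0 ε, deriv w y = C * y ^ (2*γ - 1) - y * f₁ y
      - y ^ (2*γ - 1) * ∫ τ in (0:ℝ)..y, τ ^ (1 - 2*γ) * f₂ τ := by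
  have hrpow : ∀ p : ℝ, ∀ y ∈ Ioo 0 ε, DifferentiableAt ℝ (fun t : ℝ => t ^ p) y := fun _ y hy =>
    (hasDerivAt_rpow_const (Or.inl hy.1.ne')).differentiableAt
  have hw' : ∀ y ∈ Ioo 0 ε, DifferentiableAt ℝ (deriv w) y := fun y hy =>
    ((hw.deriv_of_isOpen (m := 1) isOpen_Ioo (by norm_num)).differentiableOn one_ne_zero y
      hy).differentiableAt (isOpen_Ioo.mem_nhds hy)
  have hf₁' : ∀ y ∈ Ioo 0 ε, DifferentiableAt ℝ f₁ y := fun y hy =>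
    (hf₁.differentiableOn one_ne_zero y (Ioo_subset_Icc_self hy)).differentiableAt
      (Icc_mem_nhds hy.1 hy.2)
  obtain ⟨C, hC⟩ := exists_eq_add_of_hasDerivAt_Ioo
    (f := fun t => t ^ (1 - 2*γ) * deriv w t)
    (f' := fun y => -(deriv (fun t => t ^ (2 - 2*γ) * f₁ t) y + y ^ (1 - 2*γ) * f₂ y))
    (g := fun t => -(t ^ (2 - 2*γ) * f₁ t + ∫ τ in (0:ℝ)..t, τ ^ (1 - 2*γ) * f₂ τ))
    (fun y hy => by
      rw [← heq y hy, neg_neg]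
      exact ((hrpow _ y hy).mul (hw' y hy)).hasDerivAt)
    (fun y hy => (((hrpow _ y hy).mul (hf₁' y hy)).hasDerivAt.add
      (hasDerivAt_integral_rpow_mul (by linarith) hf₂ hy)).neg)
  refine ⟨C, fun y hy => ?_⟩
  -- multiply the first integral `hC` by `y^(2γ-1)`
  have hinv : y ^ (2*γ - 1) * y ^ (1 - 2*γ) = 1 := by
    rw [← rpow_add hy.1]; norm_num
  have hcancel : y ^ (2*γ - 1) * y ^ (2 - 2*γ) = y := by
    rw [← rpow_add hy.1]; norm_num
  linear_combination y ^ (2*γ - 1) * hC y hy - deriv w y * hinv - f₁ y * hcancel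

lemma hasDerivAt_representation (hγ : 0 < γ) (hf₁ : ContinuousOn f₁ (Icc 0 ε)) {H : ℝ → ℝ}
    (hH : ContinuousOn H (Icc 0 ε)) (C : ℝ) {y : ℝ} (hy : y ∈ Ioo 0 ε) :
    HasDerivAt (fun t => C / (2*γ) * t ^ (2*γ) - (∫ σ in (0:ℝ)..t, σ * f₁ σ)
        - ∫ σ in (0:ℝ)..t, σ ^ (2*γ - 1) * H σ)
      (C * y ^ (2*γ - 1) - y * f₁ y - y ^ (2*γ - 1) * H y) y := by
  have hpow := ((hasDerivAt_rpow_const (p := 2*γ) (Or.inl hy.1.ne')).const_mul (C / (2*γ)))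
  have hf₁int : HasDerivAt (fun t => ∫ σ in (0:ℝ)..t, σ * f₁ σ) (y * f₁ y) y := by
    simpa only [rpow_one] using hasDerivAt_integral_rpow_mul (p := 1) (by norm_num) hf₁ hy
  have hHint := hasDerivAt_integral_rpow_mul (p := 2*γ - 1) (by linarith) hH hy
  exact ((hpow.sub hf₁int).sub hHint).congr_deriv (by field_simp)

end DegenerateODE

/-- One-dimensional representation formula for solutions of the degenerate ODE
`-(y^(1-2γ) w')' = (y^(2-2γ) f₁)' + y^(1-2γ) f₂` on `(0,ε)`: every solution is of the form
`w(y) = a + b y^(2γ) - ∫₀^y σ f₁(σ)dσ - ∫₀^y σ^(2γ-1) ∫₀^σ τ^(1-2γ) f₂(τ)dτ dσ`. -/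
theorem degenerate_ode_representation (γ : ℝ) (hγ : γ ∈ Set.Ioo (0:ℝ) 1)
    (ε : ℝ) (hε : 0 < ε) (f₁ f₂ w : ℝ → ℝ)
    (hf₁ : ContDiffOn ℝ 1 f₁ (Icc 0 ε))
    (hf₂ : ContinuousOn f₂ (Icc 0 ε))
    (hw : ContDiffOn ℝ 2 w (Ioo 0 ε))
    (heq : ∀ y ∈ Ioo 0 ε,
      -deriv (fun t : ℝ => t ^ (1 - 2*γ) * deriv w t) y
        = deriv (fun t : ℝ => t ^ (2 - 2*γ) * f₁ t) y + y ^ (1 - 2*γ) * f₂ y) :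
    ∃ a b : ℝ, ∀ y ∈ Ioo 0 ε,
      w y = a + b * y ^ (2*γ)
        - (∫ σ in (0:ℝ)..y, σ * f₁ σ)
        - (∫ σ in (0:ℝ)..y, σ ^ (2*γ - 1) * ∫ τ in (0:ℝ)..σ, τ ^ (1 - 2*γ) * f₂ τ) := by
  obtain ⟨hγ₀, hγ₁⟩ := hγ
  obtain ⟨C, hC⟩ := exists_deriv_eq_of_degenerate_ode hγ₁ hf₁ hf₂ hw heq
  have hH := continuousOn_integral_rpow_mul (p := 1 - 2*γ) (by linarith) hε.le hf₂
  obtain ⟨a, ha⟩ := exists_eq_add_of_hasDerivAt_Ioo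
    (fun y hy => ((hw.differentiableOn two_ne_zero y hy).differentiableAt
      (isOpen_Ioo.mem_nhds hy)).hasDerivAt)
    (fun y hy => by
      rw [hC y hy]; exact hasDerivAt_representation hγ₀ hf₁.continuousOn hH C hy)
  exact ⟨a, C / (2*γ), fun y hy => by rw [ha y hy]; ring⟩
end

section
/- Let n ≥ 2 be an integer, γ ∈ (0,1), and set p_{n,γ} = ( ∫_{ℝⁿ} (1 + |x|²)^{−(n+2γ)/2} dx )^{−1}. Then for every y > 0 and every x ∈ ℝⁿ, ∫_{ℝⁿ} p_{n,γ} · y^{2γ} (y² + |x−ξ|²)^{−(n+2γ)/2} · |ξ|^{2γ−n} dξ = (y² + |x|²)^{(2γ−n)/2} (the integral being absolutely convergent). -/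
open Real MeasureTheory

noncomputable section

/-- The normalizing constant `p_{n,γ}` of the Caffarelli–Silvestre Poisson kernel. -/
noncomputable def poissonConst (n : ℕ) (γ : ℝ) : ℝ :=
  (∫ x : EuclideanSpace ℝ (Fin n), (1 + ‖x‖ ^ 2) ^ (-((n:ℝ) + 2*γ)/2))⁻¹

/-!
The inversion `ξ ↦ ξ / |ξ|²` has Jacobian `|ξ|^(-2n)` and maps the Green's function
`|ξ|^(2γ-n)` to `|ξ|^(n-2γ)`. Since `y² + |x - ξ/|ξ|²|² = (m/|ξ|²)(t² + |x/m - ξ|²)` with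
`m = y² + |x|²` and `t = y/m`, all powers of `|ξ|` cancel and the integral becomes
`m^(-(n+2γ)/2)` times the integral of an unnormalised Poisson kernel at height `t` centred at
`x/m`. By translation and scaling that kernel integrates to `t^(-2γ) / p_{n,γ}`, and
`m^(-(n+2γ)/2) t^(-2γ) = y^(-2γ) m^((2γ-n)/2)`.
-/

open Set EuclideanGeometry Module

section InnerProductSpace

variable {E : Type*} [NormedAddCommGroup E] [InnerProductSpace ℝ E]

lemma sq_add_norm_sq_rpow_eq (p : ℝ) {t : ℝ} (ht : 0 < t) (ξ : E) :
    (t ^ 2 + ‖ξ‖ ^ 2) ^ p = (t ^ 2) ^ p * (1 + ‖t⁻¹ • ξ‖ ^ 2) ^ p := by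
  rw [← mul_rpow (by positivity) (by positivity), norm_smul, norm_inv, Real.norm_eq_abs,
    abs_of_pos ht]
  field_simp

lemma inversion_zero_one_apply (ξ : E) : inversion (0 : E) 1 ξ = (‖ξ‖ ^ 2)⁻¹ • ξ := by
  simp [inversion_def, dist_zero_right, one_div]

lemma norm_inversion_zero_one (ξ : E) : ‖inversion (0 : E) 1 ξ‖ = ‖ξ‖⁻¹ := by
  simpa [dist_zero_right] using dist_inversion_center (0 : E) ξ 1

lemma inversion_image_compl_center (c : E) {R : ℝ} (hR : R ≠ 0) :
    inversion c R '' {c}ᶜ = {c}ᶜ := by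
  rw [(inversion_involutive c hR).image_eq_preimage_symm]
  ext ξ
  simp [inversion_eq_center hR]

lemma sq_add_norm_sub_inversion_sq (y : ℝ) (x : E) {ξ : E} (hξ : ξ ≠ 0)
    (hm : y ^ 2 + ‖x‖ ^ 2 ≠ 0) :
    y ^ 2 + ‖x - inversion 0 1 ξ‖ ^ 2 = (y ^ 2 + ‖x‖ ^ 2) / ‖ξ‖ ^ 2 *
      ((y / (y ^ 2 + ‖x‖ ^ 2)) ^ 2 + ‖(y ^ 2 + ‖x‖ ^ 2)⁻¹ • x - ξ‖ ^ 2) := by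
  have hξ : ‖ξ‖ ≠ 0 := norm_ne_zero_iff.2 hξ
  rw [inversion_zero_one_apply, norm_sub_sq_real, norm_sub_sq_real, real_inner_smul_left,
    real_inner_smul_right, norm_smul, norm_smul, norm_inv, norm_inv, norm_pow, Real.norm_eq_abs,
    Real.norm_eq_abs, abs_norm, abs_of_nonneg (by positivity : 0 ≤ y ^ 2 + ‖x‖ ^ 2)]
  field_simp
  ring

lemma inversion_poisson_mul_green (n : ℕ) (γ : ℝ) {y : ℝ} (hy : 0 < y) (x : E) {ξ : E}
    (hξ : ξ ≠ 0) :
    ‖ξ‖⁻¹ ^ (2 * n) * ((y ^ 2 + ‖x - inversion 0 1 ξ‖ ^ 2) ^ (-((n:ℝ) + 2*γ)/2)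
        * ‖inversion 0 1 ξ‖ ^ (2*γ - n))
      = (y ^ 2 + ‖x‖ ^ 2) ^ (-((n:ℝ) + 2*γ)/2) *
        ((y / (y ^ 2 + ‖x‖ ^ 2)) ^ 2 + ‖(y ^ 2 + ‖x‖ ^ 2)⁻¹ • x - ξ‖ ^ 2) ^ (-((n:ℝ) + 2*γ)/2) := by
  have hξ' : 0 < ‖ξ‖ := norm_pos_iff.2 hξ
  have hm : 0 < y ^ 2 + ‖x‖ ^ 2 := by positivity
  rw [sq_add_norm_sub_inversion_sq y x hξ hm.ne', norm_inversion_zero_one,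
    mul_rpow (by positivity) (by positivity), div_rpow hm.le (by positivity)]
  have hpow : ‖ξ‖⁻¹ ^ (2 * n) * ‖ξ‖⁻¹ ^ (2*γ - n) / (‖ξ‖ ^ 2) ^ (-((n:ℝ) + 2*γ)/2) = 1 := by
    rw [← rpow_natCast, inv_rpow hξ'.le, inv_rpow hξ'.le, ← rpow_natCast ‖ξ‖ 2,
      ← rpow_mul hξ'.le, ← rpow_neg hξ'.le, ← rpow_neg hξ'.le, ← rpow_add hξ', ← rpow_sub hξ']
    convert rpow_zero ‖ξ‖ using 2
    push_cast; ring
  calc _ = (‖ξ‖⁻¹ ^ (2 * n) * ‖ξ‖⁻¹ ^ (2*γ - n) / (‖ξ‖ ^ 2) ^ (-((n:ℝ) + 2*γ)/2)) *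
        ((y ^ 2 + ‖x‖ ^ 2) ^ (-((n:ℝ) + 2*γ)/2) *
        ((y / (y ^ 2 + ‖x‖ ^ 2)) ^ 2 + ‖(y ^ 2 + ‖x‖ ^ 2)⁻¹ • x - ξ‖ ^ 2) ^ (-((n:ℝ) + 2*γ)/2)) := by
        ring
    _ = _ := by rw [hpow, one_mul]

end InnerProductSpace

section HaarMeasure

variable {E F : Type*} [NormedAddCommGroup E] [InnerProductSpace ℝ E] [FiniteDimensional ℝ E]
  [NormedAddCommGroup F] [NormedSpace ℝ F]

lemma abs_det_smul_reflection (a : ℝ) (K : Submodule ℝ E) :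
    |(a • (K.reflection : E →L[ℝ] E)).det| = |a| ^ finrank ℝ E := by
  have h : |LinearMap.det K.reflection.toLinearMap| = 1 := by
    rw [K.det_reflection, abs_neg_one_pow]
  rw [ContinuousLinearMap.det, ContinuousLinearMap.toLinearMap_smul, LinearMap.det_smul, abs_mul,
    abs_pow]
  exact mul_right_eq_self₀.2 (Or.inl h)

variable [MeasurableSpace E] [BorelSpace E] (μ : Measure E) [μ.IsAddHaarMeasure]

lemma integral_one_add_norm_sq_rpow_pos {r : ℝ} (hr : finrank ℝ E < r) :
    0 < ∫ u, (1 + ‖u‖ ^ 2) ^ (-r / 2) ∂μ := by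
  rw [integral_pos_iff_support_of_nonneg (fun u => by positivity)
    (integrable_rpow_neg_one_add_norm_sq hr)]
  have : Function.support (fun u : E => (1 + ‖u‖ ^ 2) ^ (-r / 2)) = univ :=
    Function.support_eq_univ fun u => by positivity
  rw [this]
  exact isOpen_univ.measure_pos μ univ_nonempty

lemma integrable_sq_add_norm_sub_sq_rpow {r : ℝ} (hr : finrank ℝ E < r) {t : ℝ} (ht : 0 < t)
    (c : E) : Integrable (fun ξ => (t ^ 2 + ‖c - ξ‖ ^ 2) ^ (-r / 2)) μ := by
  refine (integrable_comp_sub_left (fun ξ => (t ^ 2 + ‖ξ‖ ^ 2) ^ (-r / 2)) c).2 ?_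
  simp_rw [sq_add_norm_sq_rpow_eq _ ht]
  exact ((integrable_comp_smul_iff μ (fun u => (1 + ‖u‖ ^ 2) ^ (-r / 2)) (inv_ne_zero ht.ne')).2
    (integrable_rpow_neg_one_add_norm_sq hr)).const_mul _

lemma integral_sq_add_norm_sub_sq_rpow (r : ℝ) {t : ℝ} (ht : 0 < t) (c : E) :
    ∫ ξ, (t ^ 2 + ‖c - ξ‖ ^ 2) ^ (-r / 2) ∂μ
      = t ^ ((finrank ℝ E : ℝ) - r) * ∫ u, (1 + ‖u‖ ^ 2) ^ (-r / 2) ∂μ := by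
  rw [integral_sub_left_eq_self (fun ξ => (t ^ 2 + ‖ξ‖ ^ 2) ^ (-r / 2)) μ c]
  simp_rw [sq_add_norm_sq_rpow_eq _ ht]
  rw [integral_const_mul,
    Measure.integral_comp_inv_smul μ (fun u => (1 + ‖u‖ ^ 2) ^ (-r / 2)), smul_eq_mul, ← mul_assoc,
    abs_of_pos (pow_pos ht _), ← rpow_natCast t 2, ← rpow_mul ht.le,
    ← rpow_natCast t (finrank ℝ E), ← rpow_add ht]
  congr 2
  ring

variable [Nontrivial E]

theorem integrable_comp_inversion_iff (c : E) {R : ℝ} (hR : R ≠ 0) (g : E → F) :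
    Integrable (fun ξ => (R / dist ξ c) ^ (2 * finrank ℝ E) • g (inversion c R ξ)) μ ↔
      Integrable g μ := by
  have := integrableOn_image_iff_integrableOn_abs_det_fderiv_smul μ (measurableSet_singleton c).compl
    (fun ξ hξ => (hasFDerivAt_inversion (R := R) hξ).hasFDerivWithinAt)
    (inversion_injective c hR).injOn g
  simpa only [inversion_image_compl_center c hR, IntegrableOn, restrict_compl_singleton,
    abs_det_smul_reflection, abs_pow, sq_abs, pow_mul] using this.symm

theorem integral_comp_inversion (c : E) {R : ℝ} (hR : R ≠ 0) (g : E → F) :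
    ∫ ξ, (R / dist ξ c) ^ (2 * finrank ℝ E) • g (inversion c R ξ) ∂μ = ∫ ξ, g ξ ∂μ := by
  have := integral_image_eq_integral_abs_det_fderiv_smul μ (measurableSet_singleton c).compl
    (fun ξ hξ => (hasFDerivAt_inversion (R := R) hξ).hasFDerivWithinAt)
    (inversion_injective c hR).injOn g
  simpa only [inversion_image_compl_center c hR, restrict_compl_singleton,
    abs_det_smul_reflection, abs_pow, sq_abs, pow_mul] using this.symm

lemma inversion_poisson_mul_green_ae_eq (γ : ℝ) {y : ℝ} (hy : 0 < y) (x : E) :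
    (fun ξ => (1 / dist ξ 0) ^ (2 * finrank ℝ E) •
      ((y ^ 2 + ‖x - inversion 0 1 ξ‖ ^ 2) ^ (-((finrank ℝ E : ℝ) + 2*γ)/2)
        * ‖inversion 0 1 ξ‖ ^ (2*γ - finrank ℝ E)))
      =ᵐ[μ] fun ξ => (y ^ 2 + ‖x‖ ^ 2) ^ (-((finrank ℝ E : ℝ) + 2*γ)/2) *
        ((y / (y ^ 2 + ‖x‖ ^ 2)) ^ 2 + ‖(y ^ 2 + ‖x‖ ^ 2)⁻¹ • x - ξ‖ ^ 2)
          ^ (-((finrank ℝ E : ℝ) + 2*γ)/2) := by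
  filter_upwards [Measure.ae_ne μ 0] with ξ hξ
  rw [one_div, dist_zero_right, smul_eq_mul, inversion_poisson_mul_green _ γ hy x hξ]

theorem integrable_poisson_mul_green {γ : ℝ} (hγ : 0 < γ) {y : ℝ} (hy : 0 < y) (x : E) :
    Integrable (fun ξ => (y ^ 2 + ‖x - ξ‖ ^ 2) ^ (-((finrank ℝ E : ℝ) + 2*γ)/2)
      * ‖ξ‖ ^ (2*γ - finrank ℝ E)) μ := by
  have hm : 0 < y ^ 2 + ‖x‖ ^ 2 := by positivity
  refine (integrable_comp_inversion_iff μ 0 one_ne_zero _).1 ?_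
  refine Integrable.congr ?_ (inversion_poisson_mul_green_ae_eq μ γ hy x).symm
  exact (integrable_sq_add_norm_sub_sq_rpow μ (by linarith) (div_pos hy hm) _).const_mul _

theorem integral_poisson_mul_green (γ : ℝ) {y : ℝ} (hy : 0 < y) (x : E) :
    ∫ ξ, (y ^ 2 + ‖x - ξ‖ ^ 2) ^ (-((finrank ℝ E : ℝ) + 2*γ)/2) * ‖ξ‖ ^ (2*γ - finrank ℝ E) ∂μ
      = y ^ (-(2*γ)) * (y ^ 2 + ‖x‖ ^ 2) ^ ((2*γ - finrank ℝ E)/2)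
        * ∫ u, (1 + ‖u‖ ^ 2) ^ (-((finrank ℝ E : ℝ) + 2*γ)/2) ∂μ := by
  have hm : 0 < y ^ 2 + ‖x‖ ^ 2 := by positivity
  rw [← integral_comp_inversion μ 0 one_ne_zero, integral_congr_ae
    (inversion_poisson_mul_green_ae_eq μ γ hy x), integral_const_mul,
    integral_sq_add_norm_sub_sq_rpow μ _ (div_pos hy hm), ← mul_assoc, div_rpow hy.le hm.le,
    sub_add_cancel_left]
  congr 1
  rw [mul_div, mul_comm, mul_div_assoc, ← rpow_sub hm]
  congr 2
  ring

end HaarMeasure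

/-- Convolving the Poisson kernel with the Green's function `|ξ|^(2γ-n)` of the fractional
Laplacian yields `(y² + |x|²)^((2γ-n)/2)`: the flat-model instance of `Γ_g = K_g * G_h`. -/
theorem poisson_convolution_green (n : ℕ) (hn : 2 ≤ n) (γ : ℝ) (hγ : γ ∈ Set.Ioo (0:ℝ) 1)
    (y : ℝ) (hy : 0 < y) (x : EuclideanSpace ℝ (Fin n)) :
    Integrable (fun ξ : EuclideanSpace ℝ (Fin n) =>
        poissonConst n γ * y ^ (2*γ) * (y ^ 2 + ‖x - ξ‖ ^ 2) ^ (-((n:ℝ) + 2*γ)/2)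
          * ‖ξ‖ ^ (2*γ - (n:ℝ)))
    ∧ (∫ ξ : EuclideanSpace ℝ (Fin n),
          poissonConst n γ * y ^ (2*γ) * (y ^ 2 + ‖x - ξ‖ ^ 2) ^ (-((n:ℝ) + 2*γ)/2)
            * ‖ξ‖ ^ (2*γ - (n:ℝ)))
        = (y ^ 2 + ‖x‖ ^ 2) ^ ((2*γ - (n:ℝ))/2) := by
  have : NeZero n := ⟨by omega⟩
  have hint := integrable_poisson_mul_green volume hγ.1 hy x
  have hval := integral_poisson_mul_green volume γ hy x
  have hI := integral_one_add_norm_sq_rpow_pos (volume : Measure (EuclideanSpace ℝ (Fin n)))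
    (r := n + 2*γ) (by simp [hγ.1])
  simp only [finrank_euclideanSpace_fin] at hint hval
  set I := ∫ u : EuclideanSpace ℝ (Fin n), (1 + ‖u‖ ^ 2) ^ (-((n:ℝ) + 2*γ)/2)
  simp_rw [mul_assoc]
  refine ⟨(hint.const_mul _).const_mul _, ?_⟩
  rw [integral_const_mul, integral_const_mul, hval, poissonConst]
  calc _ = (I⁻¹ * I) * (y ^ (2*γ) * y ^ (-(2*γ))) * (y ^ 2 + ‖x‖ ^ 2) ^ ((2*γ - (n:ℝ))/2) := by
        ring
    _ = _ := by rw [inv_mul_cancel₀ hI.ne', ← rpow_add hy, add_neg_cancel, rpow_zero, one_mul,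
        one_mul]
end
end
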